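/- Let d ≥ 1 and let G = (V,E) be a finite simple graph with n ≥ d+1 vertices. Then a(G, ℓ∞^d) ≤ (n/(n−1)) · ⌊(min_{v ∈ V} deg_G(v))/d⌋. -/

import Mathlib

open scoped Classical
open Matrix

noncomputable section

/-- The list of eigenvalues (roots of the characteristic polynomial, with multiplicity)
of a real matrix, sorted in nondecreasing order. -/
def sortedEigs {m : Type*} [Fintype m] [DecidableEq m] (A : Matrix m m ℝ) : List ℝ :=
  A.charpoly.roots.sort (· ≤ ·)

/-- `eigval A j` is the `j`-th smallest eigenvalue `λ_j(A)` (1-based, with multiplicity). -/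
def eigval {m : Type*} [Fintype m] [DecidableEq m] (A : Matrix m m ℝ) (j : ℕ) : ℝ :=
  (sortedEigs A).getD (j - 1) 0

variable {V : Type*} [Fintype V] [DecidableEq V]

/-- `p` is an ℓ∞-framework position for `G` (i.e. `p ∈ W(G, ℓ∞^d)`): along each edge the
difference of the endpoints is nonzero and has a unique coordinate of maximal absolute
value. -/
def IsLinfPos {d : ℕ} (G : SimpleGraph V) (p : V → Fin d → ℝ) : Prop :=
  ∀ ⦃v w : V⦄, G.Adj v w → p v ≠ p w ∧
    ∃ i : Fin d, ∀ j : Fin d, j ≠ i → |p v j - p w j| < |p v i - p w i|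

/-- The `i`-th monochrome subgraph of the framework `(G, p)` in `ℓ∞^d`: the spanning
subgraph of `G` whose edges are those on which the `i`-th coordinate of the difference of
the endpoints has maximal absolute value. -/
def mono {d : ℕ} (G : SimpleGraph V) (p : V → Fin d → ℝ) (i : Fin d) : SimpleGraph V where
  Adj v w := G.Adj v w ∧ ∀ j : Fin d, |p v j - p w j| ≤ |p v i - p w i|
  symm := by
    refine ⟨?_⟩
    intro v w h
    refine ⟨h.1.symm, fun j => ?_⟩
    rw [abs_sub_comm (p w j), abs_sub_comm (p w i)]
    exact h.2 j
  loopless := ⟨fun v h => G.loopless.irrefl v h.1⟩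

/-- The rigidity matrix `R(G,p)` of a framework in `ℓ∞^d`, with rows indexed by edges and
columns indexed by vertex-coordinate pairs: the row of an edge `vw ∈ E_i` has entry
`sgn((p v − p w) i)` in column `(v, i)`, entry `−sgn((p v − p w) i) = sgn((p w − p v) i)`
in column `(w, i)`, and zeros elsewhere. -/
def rigidity {d : ℕ} (G : SimpleGraph V) (p : V → Fin d → ℝ) :
    Matrix G.edgeSet (V × Fin d) ℝ := fun e vi =>
  if h : vi.1 ∈ (e : Sym2 V) then
    if (mono G p vi.2).Adj vi.1 (Sym2.Mem.other h) then
      Real.sign (p vi.1 vi.2 - p (Sym2.Mem.other h) vi.2)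
    else 0
  else 0

/-- The framework Laplacian `L(G,p) = R(G,p)ᵀ R(G,p)` of a framework in `ℓ∞^d`. -/
def fLap {d : ℕ} (G : SimpleGraph V) (p : V → Fin d → ℝ) :
    Matrix (V × Fin d) (V × Fin d) ℝ :=
  (rigidity G p)ᵀ * rigidity G p

/-- The algebraic connectivity (Fiedler number) `a(H) = λ₂(L(H))` of a finite simple
graph. -/
def algConn (H : SimpleGraph V) : ℝ := eigval (H.lapMatrix ℝ) 2

/-- The algebraic connectivity of `G` in `ℓ∞^d`:
`a(G, ℓ∞^d) = sup { λ_{d+1}(L(G,p)) : p ∈ W(G, ℓ∞^d) }`. -/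
def algConnLinf (d : ℕ) (G : SimpleGraph V) : ℝ :=
  sSup {t : ℝ | ∃ p : V → Fin d → ℝ, IsLinfPos G p ∧ t = eigval (fLap G p) (d + 1)}

end

/-!
For a position `p`, the `d` infinitesimal translations `(w, k) ↦ c k` lie in the kernel of the
rigidity matrix. Since no edge has two colours, the monochrome degrees at a vertex `v` of
minimum degree `δ` add up to at most `δ`, so some colour `i` has degree at most `⌊δ/d⌋` at `v`.
The centred indicator `e_v - 𝟙/n` placed in coordinate `i` is orthogonal to the translations,
has squared norm `(n-1)/n`, and its image under the rigidity matrix has squared norm at most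
`deg_{G_i}(v)`. Together with the translations it spans a `(d+1)`-dimensional space on which the
Rayleigh quotient of `L(G,p)` is at most `n/(n-1) · ⌊δ/d⌋`, and the easy half of the
Courant–Fischer theorem bounds `λ_{d+1}(L(G,p))` by the same number.
-/

open Finset Module

theorem List.getD_le_of_lt_countP {α : Type*} [LinearOrder α] {l : List α}
    (hl : l.Pairwise (· ≤ ·)) (x : α) {b : α} {k : ℕ}
    (hk : k < l.countP (· ≤ b)) : l.getD k x ≤ b := by
  induction l generalizing k with
  | nil => simp at hk
  | cons a l ih =>
    rw [List.pairwise_cons] at hl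
    cases k with
    | zero =>
      obtain ⟨y, hy, hyb⟩ := List.countP_pos_iff.mp hk
      rcases List.mem_cons.mp hy with rfl | hy
      · simpa using hyb
      · simpa using (hl.1 y hy).trans (by simpa using hyb)
    | succ k =>
      rw [List.getD_cons_succ]
      refine ih hl.2 ?_
      have := List.countP_cons (p := fun y => decide (y ≤ b)) (a := a) (l := l)
      split_ifs at this <;> omega

namespace Matrix

variable {κ : Type*} [Fintype κ] [DecidableEq κ]

theorem dotProduct_self_eq_of_mul_transpose_eq_one {U : Matrix κ κ ℝ} (hU : U * Uᵀ = 1)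
    (u : κ → ℝ) : u ⬝ᵥ u = (Uᵀ *ᵥ u) ⬝ᵥ (Uᵀ *ᵥ u) := by
  rw [dotProduct_mulVec, vecMul_transpose, mulVec_mulVec, hU, one_mulVec]

theorem dotProduct_mulVec_mul_diagonal_mul_transpose (U : Matrix κ κ ℝ) (w u : κ → ℝ) :
    u ⬝ᵥ ((U * diagonal w * Uᵀ) *ᵥ u) = ∑ j, w j * (Uᵀ *ᵥ u) j ^ 2 := by
  rw [← mulVec_mulVec, ← mulVec_mulVec, dotProduct_mulVec, ← mulVec_transpose]
  simp [dotProduct, sq, mulVec_diagonal, mul_left_comm]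

namespace IsHermitian

variable {A : Matrix κ κ ℝ}

theorem eigval_le_of_le_card (hA : A.IsHermitian) {k : ℕ} {b : ℝ} (hk : 1 ≤ k)
    (h : k ≤ #{j | hA.eigenvalues j ≤ b}) : eigval A k ≤ b := by
  refine List.getD_le_of_lt_countP (A.charpoly.roots.pairwise_sort _) 0 ?_
  rw [← Multiset.coe_countP, Multiset.sort_eq, hA.roots_charpoly_eq_eigenvalues,
    Multiset.countP_map]
  simp only [RCLike.ofReal_real_eq_id]
  exact (by omega : k - 1 < #{j | hA.eigenvalues j ≤ b})

theorem finrank_le_card_eigenvalues_le (hA : A.IsHermitian) {b : ℝ} (W : Submodule ℝ (κ → ℝ))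
    (hW : ∀ u ∈ W, u ⬝ᵥ (A *ᵥ u) ≤ b * (u ⬝ᵥ u)) :
    finrank ℝ W ≤ #{j | hA.eigenvalues j ≤ b} := by
  set U : Matrix κ κ ℝ := (hA.eigenvectorUnitary : Matrix κ κ ℝ)
  have hU : U * Uᵀ = 1 := by
    simpa [star_eq_conjTranspose] using Unitary.coe_mul_star_self hA.eigenvectorUnitary
  have hAU : A = U * diagonal hA.eigenvalues * Uᵀ := by
    simpa [star_eq_conjTranspose] using hA.spectral_theorem
  set S : Finset κ := {j | hA.eigenvalues j ≤ b}
  -- once `#S < finrank W`, some nonzero `u ∈ W` has all its eigen-coordinates over `S` zero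
  let f : W →ₗ[ℝ] (S → ℝ) :=
    LinearMap.funLeft ℝ ℝ (Subtype.val : S → κ) ∘ₗ (Uᵀ).mulVecLin ∘ₗ W.subtype
  by_contra! h
  obtain ⟨⟨u, hu⟩, huker, hu0⟩ := Submodule.ne_bot_iff _ |>.mp <|
    LinearMap.ker_ne_bot_of_finrank_lt (f := f) (by simpa using h)
  have hb : ∀ j, (Uᵀ *ᵥ u) j ≠ 0 → b < hA.eigenvalues j := fun j hj => by
    by_contra! hjb
    exact hj (congrFun huker ⟨j, by simpa [S] using hjb⟩)
  obtain ⟨j₀, hj₀⟩ : ∃ j, (Uᵀ *ᵥ u) j ≠ 0 := by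
    by_contra! hz
    refine hu0 (Subtype.ext ?_)
    change u = 0
    rw [← one_mulVec u, ← hU, ← mulVec_mulVec, show Uᵀ *ᵥ u = 0 from funext hz, mulVec_zero]
  have hRayleigh := hW u hu
  rw [dotProduct_self_eq_of_mul_transpose_eq_one hU, hAU,
    dotProduct_mulVec_mul_diagonal_mul_transpose, dotProduct, mul_sum] at hRayleigh
  refine hRayleigh.not_gt (sum_lt_sum (fun j _ => ?_) ⟨j₀, mem_univ _, ?_⟩)
  · by_cases hj : (Uᵀ *ᵥ u) j = 0
    · simp [hj]
    · rw [← sq]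
      exact mul_le_mul_of_nonneg_right (hb j hj).le (sq_nonneg _)
  · rw [← sq]
    exact mul_lt_mul_of_pos_right (hb j₀ hj₀) (by positivity)

end IsHermitian

end Matrix

theorem SimpleGraph.sum_edgeSet_indicator_incidenceSet {V : Type*} [Fintype V] [DecidableEq V]
    {G H : SimpleGraph V} (h : H ≤ G) (v : V) :
    ∑ e : G.edgeSet, (if (e : Sym2 V) ∈ H.incidenceSet v then 1 else 0 : ℝ) = H.degree v := by
  rw [sum_boole, ← H.card_incidenceSet_eq_degree, ← Fintype.card_subtype]
  norm_cast
  exact Fintype.card_congr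
    (Equiv.subtypeSubtypeEquivSubtype fun he => SimpleGraph.edgeSet_mono h he.1)

section Monochrome

variable {V : Type*} {d : ℕ} {G : SimpleGraph V} {p : V → Fin d → ℝ}

theorem mono_le (i : Fin d) : mono G p i ≤ G := fun _ _ h => h.1

theorem IsLinfPos.eq_of_mono_adj (hp : IsLinfPos G p) {a b : V} {i j : Fin d}
    (hi : (mono G p i).Adj a b) (hj : (mono G p j).Adj a b) : i = j := by
  obtain ⟨-, k, hk⟩ := hp hi.1
  have key : ∀ l, (mono G p l).Adj a b → l = k := fun l hl => by
    by_contra hlk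
    exact (hk l hlk).not_ge (hl.2 k)
  rw [key i hi, key j hj]

variable [Fintype V] [DecidableEq V]

theorem IsLinfPos.sum_degree_mono_le (hp : IsLinfPos G p) (v : V) :
    ∑ i, (mono G p i).degree v ≤ G.degree v := by
  simp only [← SimpleGraph.card_neighborFinset_eq_degree]
  rw [← card_biUnion fun i _ j _ hij => disjoint_left.mpr fun w hwi hwj =>
    hij (hp.eq_of_mono_adj (by simpa using hwi) (by simpa using hwj))]
  exact card_le_card <| biUnion_subset.mpr fun i _ w hw => by
    simpa using mono_le i (by simpa using hw)

theorem IsLinfPos.exists_degree_mono_le (hp : IsLinfPos G p) (hd : 1 ≤ d) (v : V) :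
    ∃ i, (mono G p i).degree v ≤ G.degree v / d := by
  have : Nonempty (Fin d) := ⟨⟨0, hd⟩⟩
  obtain ⟨i, -, hi⟩ := exists_le_of_sum_le (f := fun i => (mono G p i).degree v * d)
    (g := fun _ => G.degree v) univ_nonempty <| by
      rw [← sum_mul, sum_const, card_univ, Fintype.card_fin, smul_eq_mul, mul_comm d]
      exact Nat.mul_le_mul_right d (hp.sum_degree_mono_le v)
  exact ⟨i, (Nat.le_div_iff_mul_le (by omega)).mpr hi⟩

end Monochrome

section TestVectors

variable {V : Type*} {d : ℕ}

def inCoord (i : Fin d) (φ : V → ℝ) : V × Fin d → ℝ :=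
  fun wk => if wk.2 = i then φ wk.1 else 0

-- `c ∘ Prod.snd` is the infinitesimal translation of the framework by `c`.
def withTranslations (x : V × Fin d → ℝ) : (Fin d → ℝ) × ℝ →ₗ[ℝ] (V × Fin d → ℝ) :=
  (LinearMap.funLeft ℝ ℝ Prod.snd).coprod (LinearMap.toSpanSingleton ℝ _ x)

theorem withTranslations_apply (x : V × Fin d → ℝ) (z : (Fin d → ℝ) × ℝ) :
    withTranslations x z = z.1 ∘ Prod.snd + z.2 • x :=
  rfl

variable [Fintype V]

theorem comp_snd_dotProduct_comp_snd (c c' : Fin d → ℝ) :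
    (c ∘ Prod.snd : V × Fin d → ℝ) ⬝ᵥ (c' ∘ Prod.snd) = Fintype.card V * (c ⬝ᵥ c') := by
  simp [dotProduct, Fintype.sum_prod_type]

theorem comp_snd_dotProduct_inCoord (c : Fin d → ℝ) (i : Fin d) (φ : V → ℝ) :
    (c ∘ Prod.snd : V × Fin d → ℝ) ⬝ᵥ inCoord i φ = c i * ∑ w, φ w := by
  simp [dotProduct, Fintype.sum_prod_type, inCoord, mul_sum]

theorem inCoord_dotProduct_inCoord (i : Fin d) (φ ψ : V → ℝ) :
    inCoord i φ ⬝ᵥ inCoord i ψ = φ ⬝ᵥ ψ := by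
  simp [dotProduct, Fintype.sum_prod_type, inCoord]

theorem withTranslations_inCoord_dotProduct_self {i : Fin d} {φ : V → ℝ} (hφ : ∑ w, φ w = 0)
    (z : (Fin d → ℝ) × ℝ) :
    withTranslations (inCoord i φ) z ⬝ᵥ withTranslations (inCoord i φ) z =
      Fintype.card V * (z.1 ⬝ᵥ z.1) + z.2 ^ 2 * (φ ⬝ᵥ φ) := by
  simp only [withTranslations_apply, add_dotProduct, dotProduct_add, smul_dotProduct,
    dotProduct_smul]
  rw [dotProduct_comm (inCoord i φ), comp_snd_dotProduct_comp_snd, comp_snd_dotProduct_inCoord,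
    inCoord_dotProduct_inCoord, hφ]
  simp only [smul_eq_mul]
  ring

theorem withTranslations_inCoord_injective {i : Fin d} {φ : V → ℝ} (hφ : ∑ w, φ w = 0)
    (hφ0 : φ ≠ 0) : Function.Injective (withTranslations (inCoord i φ)) := by
  obtain ⟨w, -⟩ := Function.ne_iff.mp hφ0
  have hV : (0 : ℝ) < Fintype.card V := Nat.cast_pos.mpr (Fintype.card_pos_iff.mpr ⟨w⟩)
  rw [← LinearMap.ker_eq_bot, LinearMap.ker_eq_bot']
  intro z hz
  have h := withTranslations_inCoord_dotProduct_self (i := i) hφ z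
  rw [hz, dotProduct_zero, eq_comm, add_eq_zero_iff_of_nonneg
    (mul_nonneg hV.le (by simpa using dotProduct_star_self_nonneg z.1))
    (mul_nonneg (sq_nonneg _) (by simpa using dotProduct_star_self_nonneg φ))] at h
  simp only [mul_eq_zero, dotProduct_self_eq_zero, pow_eq_zero_iff two_ne_zero] at h
  exact Prod.ext (h.1.resolve_left hV.ne') (h.2.resolve_right hφ0)

variable [DecidableEq V]

noncomputable def centeredSingle (v : V) : V → ℝ :=
  fun w => (Pi.single v 1 : V → ℝ) w - 1 / Fintype.card V

theorem sum_centeredSingle (v : V) : ∑ w, centeredSingle v w = 0 := by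
  have : Nonempty V := ⟨v⟩
  have : (Fintype.card V : ℝ) ≠ 0 := Nat.cast_ne_zero.mpr Fintype.card_ne_zero
  simp [centeredSingle, sum_sub_distrib]

theorem centeredSingle_dotProduct_self (v : V) :
    centeredSingle v ⬝ᵥ centeredSingle v = (Fintype.card V - 1) / Fintype.card V := by
  have : Nonempty V := ⟨v⟩
  have : (Fintype.card V : ℝ) ≠ 0 := Nat.cast_ne_zero.mpr Fintype.card_ne_zero
  simp [centeredSingle, dotProduct, sub_mul, mul_sub, sum_sub_distrib, Pi.single_apply]
  field_simp

end TestVectors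

section Rigidity

variable {V : Type*} [DecidableEq V] {d : ℕ} {G : SimpleGraph V} {p : V → Fin d → ℝ}

theorem rigidity_apply_mk_left {a b : V} (he : s(a, b) ∈ G.edgeSet) (k : Fin d) :
    rigidity G p ⟨s(a, b), he⟩ (a, k) =
      if (mono G p k).Adj a b then Real.sign (p a k - p b k) else 0 := by
  have hb : Sym2.Mem.other (Sym2.mem_mk_left a b) = b :=
    Sym2.congr_right.mp (Sym2.other_spec _)
  simp only [rigidity, dif_pos (Sym2.mem_mk_left a b), hb]

theorem rigidity_apply_of_notMem {e : G.edgeSet} {w : V} (hw : w ∉ (e : Sym2 V)) (k : Fin d) :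
    rigidity G p e (w, k) = 0 :=
  dif_neg hw

variable [Fintype V]

theorem rigidity_mulVec_mk {a b : V} (he : s(a, b) ∈ G.edgeSet) (u : V × Fin d → ℝ) :
    (rigidity G p *ᵥ u) ⟨s(a, b), he⟩ =
      ∑ k, if (mono G p k).Adj a b then Real.sign (p a k - p b k) * (u (a, k) - u (b, k))
        else 0 := by
  have hab : a ≠ b := (G.mem_edgeSet.mp he).ne
  have hswap : (⟨s(a, b), he⟩ : G.edgeSet) = ⟨s(b, a), Sym2.eq_swap ▸ he⟩ :=
    Subtype.ext Sym2.eq_swap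
  rw [mulVec, dotProduct, Fintype.sum_prod_type,
    sum_eq_add_of_mem a b (mem_univ _) (mem_univ _) hab fun w _ hw => ?_, ← sum_add_distrib]
  · refine sum_congr rfl fun k _ => ?_
    rw [rigidity_apply_mk_left, hswap, rigidity_apply_mk_left, (mono G p k).adj_comm b a]
    split_ifs
    · rw [← neg_sub (p a k), Real.sign_neg]; ring
    · simp
  · exact sum_eq_zero fun k _ => by
      rw [rigidity_apply_of_notMem (by simpa [Sym2.mem_iff] using hw), zero_mul]

theorem rigidity_mulVec_comp_snd (c : Fin d → ℝ) : rigidity G p *ᵥ (c ∘ Prod.snd) = 0 := by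
  ext ⟨e, he⟩
  induction e using Sym2.ind with
  | _ a b => simp [rigidity_mulVec_mk]

theorem rigidity_mulVec_withTranslations (x : V × Fin d → ℝ) (z : (Fin d → ℝ) × ℝ) :
    rigidity G p *ᵥ withTranslations x z = z.2 • (rigidity G p *ᵥ x) := by
  rw [withTranslations_apply, mulVec_add, mulVec_smul, rigidity_mulVec_comp_snd, zero_add]

theorem rigidity_mulVec_inCoord_mk {a b : V} (he : s(a, b) ∈ G.edgeSet) (i : Fin d)
    (φ : V → ℝ) :
    (rigidity G p *ᵥ inCoord i φ) ⟨s(a, b), he⟩ =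
      if (mono G p i).Adj a b then Real.sign (p a i - p b i) * (φ a - φ b) else 0 := by
  rw [rigidity_mulVec_mk, sum_eq_single i (fun k _ hk => by simp [inCoord, hk]) (by simp)]
  simp [inCoord]

theorem rigidity_mulVec_inCoord_centeredSingle_dotProduct_self_le (i : Fin d) (v : V) :
    (rigidity G p *ᵥ inCoord i (centeredSingle v)) ⬝ᵥ
      (rigidity G p *ᵥ inCoord i (centeredSingle v)) ≤ (mono G p i).degree v := by
  rw [← G.sum_edgeSet_indicator_incidenceSet (mono_le i) v, dotProduct]
  refine sum_le_sum fun ⟨e, he⟩ _ => ?_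
  induction e using Sym2.ind with
  | _ a b =>
    have hab : a ≠ b := (G.mem_edgeSet.mp he).ne
    have hσ : Real.sign (p a i - p b i) * Real.sign (p a i - p b i) ≤ 1 := by
      rcases Real.sign_apply_eq (p a i - p b i) with h | h | h <;> simp [h]
    simp only [rigidity_mulVec_inCoord_mk, SimpleGraph.mk'_mem_incidenceSet_iff, centeredSingle,
      sub_sub_sub_cancel_right]
    by_cases hm : (mono G p i).Adj a b
    · simp only [hm, true_and, if_true]
      split_ifs with hv
      · rcases hv with rfl | rfl <;> simpa [hab, hab.symm] using hσ
      · obtain ⟨hva, hvb⟩ := not_or.mp hv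
        simp [Ne.symm hva, Ne.symm hvb]
    · simp [hm]

theorem fLap_isHermitian (G : SimpleGraph V) (p : V → Fin d → ℝ) : (fLap G p).IsHermitian := by
  simpa [fLap] using isHermitian_conjTranspose_mul_self (rigidity G p)

theorem dotProduct_fLap_mulVec (u : V × Fin d → ℝ) :
    u ⬝ᵥ (fLap G p *ᵥ u) = (rigidity G p *ᵥ u) ⬝ᵥ (rigidity G p *ᵥ u) := by
  rw [fLap, ← mulVec_mulVec, dotProduct_mulVec, vecMul_transpose]

theorem dotProduct_fLap_mulVec_le_of_mem_range_withTranslations {i : Fin d} {φ : V → ℝ}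
    (hφ : ∑ w, φ w = 0) {b : ℝ} (hb : 0 ≤ b)
    (hx : (rigidity G p *ᵥ inCoord i φ) ⬝ᵥ (rigidity G p *ᵥ inCoord i φ) ≤ b * (φ ⬝ᵥ φ))
    {u : V × Fin d → ℝ} (hu : u ∈ LinearMap.range (withTranslations (inCoord i φ))) :
    u ⬝ᵥ (fLap G p *ᵥ u) ≤ b * (u ⬝ᵥ u) := by
  obtain ⟨z, rfl⟩ := hu
  rw [dotProduct_fLap_mulVec, rigidity_mulVec_withTranslations, smul_dotProduct,
    dotProduct_smul, smul_eq_mul, smul_eq_mul, withTranslations_inCoord_dotProduct_self hφ,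
    ← mul_assoc, ← sq, mul_add]
  have : 0 ≤ b * (Fintype.card V * (z.1 ⬝ᵥ z.1)) :=
    mul_nonneg hb (mul_nonneg (by positivity) (by simpa using dotProduct_star_self_nonneg z.1))
  nlinarith [mul_le_mul_of_nonneg_left hx (sq_nonneg z.2)]

theorem IsLinfPos.eigval_fLap_le (hp : IsLinfPos G p) (hd : 1 ≤ d) (hn : 2 ≤ Fintype.card V) :
    eigval (fLap G p) (d + 1) ≤
      (Fintype.card V : ℝ) / ((Fintype.card V : ℝ) - 1) * ((G.minDegree / d : ℕ) : ℝ) := by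
  have hn' : (1 : ℝ) < Fintype.card V := by exact_mod_cast hn
  have : Nonempty V := Fintype.card_pos_iff.mp (by omega)
  obtain ⟨v, hv⟩ := G.exists_minimal_degree_vertex
  obtain ⟨i, hi⟩ := hp.exists_degree_mono_le hd v
  have hnorm := centeredSingle_dotProduct_self v
  have hφ0 : centeredSingle v ≠ 0 := fun h => by
    rw [h, dotProduct_zero, eq_comm] at hnorm
    exact (div_pos (by linarith) (by linarith)).ne' hnorm
  have hRx : (rigidity G p *ᵥ inCoord i (centeredSingle v)) ⬝ᵥ
      (rigidity G p *ᵥ inCoord i (centeredSingle v)) ≤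
      (Fintype.card V : ℝ) / ((Fintype.card V : ℝ) - 1) * ((G.minDegree / d : ℕ) : ℝ) *
        (centeredSingle v ⬝ᵥ centeredSingle v) := by
    have h0 : (Fintype.card V : ℝ) ≠ 0 := by positivity
    have h1 : (Fintype.card V : ℝ) - 1 ≠ 0 := by linarith
    rw [hnorm, hv, show ∀ m : ℝ, Fintype.card V / (Fintype.card V - 1) * m *
      ((Fintype.card V - 1) / Fintype.card V) = m from fun m => by field_simp]
    exact (rigidity_mulVec_inCoord_centeredSingle_dotProduct_self_le i v).trans
      (by exact_mod_cast hi)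
  refine (fLap_isHermitian G p).eigval_le_of_le_card (by omega) ?_
  calc d + 1 = finrank ℝ (LinearMap.range (withTranslations (inCoord i (centeredSingle v)))) := by
        rw [LinearMap.finrank_range_of_inj
          (withTranslations_inCoord_injective (sum_centeredSingle v) hφ0)]
        simp
    _ ≤ _ := (fLap_isHermitian G p).finrank_le_card_eigenvalues_le _ fun u hu =>
        dotProduct_fLap_mulVec_le_of_mem_range_withTranslations (sum_centeredSingle v)
          (by positivity) hRx hu

end Rigidity

/-- For `d ≥ 1` and a finite simple graph `G` with `n ≥ d+1` vertices,
`a(G, ℓ∞^d) ≤ (n/(n−1)) · ⌊(min_{v} deg_G(v))/d⌋`. -/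
theorem algConnLinf_le_min_degree_bound {V : Type*} [Fintype V] [DecidableEq V] {d : ℕ}
    (hd : 1 ≤ d) (G : SimpleGraph V) (hV : d + 1 ≤ Fintype.card V) :
    algConnLinf d G ≤
      ((Fintype.card V : ℝ) / ((Fintype.card V : ℝ) - 1)) * ((G.minDegree / d : ℕ) : ℝ) := by
  have hn : 2 ≤ Fintype.card V := by omega
  have : (1 : ℝ) < Fintype.card V := by exact_mod_cast hn
  refine Real.sSup_le ?_ (by positivity)
  rintro _ ⟨p, hp, rfl⟩
  exact hp.eigval_fLap_le hd hn
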